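/- Fix N ≥ 2, weights w₁,…,w_N > 0 with Σᵢ wᵢ = 1, and 0 < χ < 1. Let V : ℝ → ℝ be continuous and coercive (V(x) → +∞ as |x| → ∞), and assume the function x ↦ inf_{y∈ℝ} (w₁ V(y) + w_N V(x + y)) − log|x| is coercive on ℝ. Then for every E₀ ∈ ℝ there exists δ > 0 such that every strictly increasing configuration x₁ < ⋯ < x_N with discrete Keller–Segel energy Ẽ_N(x) ≤ E₀ satisfies min_{2 ≤ i ≤ N} (xᵢ − xᵢ₋₁) ≥ δ. -/

import Mathlib

open Real Finset Filter

/-- `rᵢ = min(Δxᵢ, Δxᵢ₊₁)` with the convention `Δx₁ = Δx_{N+1} = +∞`, for `N = n + 2`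
particles indexed from `0` to `n+1`. -/
noncomputable def rball (n : ℕ) (x : Fin (n + 2) → ℝ) (i : Fin (n + 2)) : ℝ :=
  if i.val = 0 then x 1 - x 0
  else if i.val = n + 1 then x i - x (i - 1)
  else min (x i - x (i - 1)) (x (i + 1) - x i)

/-- The one-dimensional discrete modified Keller–Segel energy with confinement `V` and
chemosensitivity `χ`:
`Ẽ_N(x) = Σᵢ wᵢ log(wᵢ/rᵢ) + Σᵢ wᵢ V(xᵢ) + χ Σᵢ Σ_{j≠i} wᵢwⱼ log|xᵢ − xⱼ|`. -/
noncomputable def kellerSegelEnergy (n : ℕ) (w : Fin (n + 2) → ℝ) (V : ℝ → ℝ) (χ : ℝ)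
    (x : Fin (n + 2) → ℝ) : ℝ :=
  ∑ i, w i * Real.log (w i / rball n x i) + ∑ i, w i * V (x i) +
    χ * ∑ i, ∑ j ∈ Finset.univ.erase i, w i * w j * Real.log |x i - x j|

/-! Bounding `log|xᵢ - xⱼ| ≥ log rᵢ` in the interaction term leaves
`Ẽ_N ≥ Σ wᵢ log wᵢ + Σ wᵢ V(xᵢ) - Σ cᵢ log rᵢ` with `cᵢ = wᵢ (1 - χ (1 - wᵢ))`, and
`0 < cᵢ ≤ wᵢ` since `0 < χ < 1`. Keeping only the term of a chosen gap `Δxₖ ≥ rₖ`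
and bounding every other `rᵢ` by the diameter `D = x_N - x₁` gives
`Σ cᵢ log rᵢ ≤ cₖ log Δxₖ + log⁺ D`. The confinement of the two extreme particles pays for
`log⁺ D`: by the coercivity hypothesis, `w₁ V(x₁) + w_N V(x_N) ≥ log⁺ D - C`. Hence
`cₖ log Δxₖ` is bounded below on every sublevel set. -/

lemma bddBelow_range_of_tendsto_cocompact {X : Type*} [TopologicalSpace X] {f g : X → ℝ}
    (hg : Continuous g) (hgf : ∀ x, g x ≤ f x) (hf : Tendsto f (cocompact X) atTop) :
    BddBelow (Set.range f) := by
  obtain ⟨K, hK, hKf⟩ := mem_cocompact.1 (hf.eventually (eventually_ge_atTop 0))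
  obtain ⟨b, hb⟩ := hK.bddBelow_image hg.continuousOn
  refine ⟨min 0 b, ?_⟩
  rintro _ ⟨x, rfl⟩
  by_cases hx : x ∈ K
  · exact (min_le_right _ _).trans ((hb ⟨x, hx, rfl⟩).trans (hgf x))
  · exact (min_le_left _ _).trans (hKf hx)

lemma exists_log_le_add_of_tendsto {f : ℝ → ℝ} {m : ℝ} (hfm : ∀ t, m ≤ f t)
    (hf : Tendsto (fun t => f t - log |t|) (cocompact ℝ) atTop) :
    ∃ C, ∀ t, log (max 1 |t|) ≤ f t + C := by
  have hlog_le (t : ℝ) : log (max 1 |t|) ≤ 1 + |t| :=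
    (log_le_self (by positivity)).trans (max_le (by linarith [abs_nonneg t]) (by linarith))
  have hf' : Tendsto (fun t => f t - log (max 1 |t|)) (cocompact ℝ) atTop := by
    refine hf.congr' ?_
    filter_upwards [tendsto_norm_cocompact_atTop.eventually (eventually_ge_atTop 1)] with t ht
    rw [max_eq_right (by simpa using ht)]
  obtain ⟨b, hb⟩ := bddBelow_range_of_tendsto_cocompact (g := fun t => m - (1 + |t|))
    (by fun_prop) (fun t => by linarith [hfm t, hlog_le t]) hf'
  exact ⟨-b, fun t => by linarith [hb ⟨t, rfl⟩]⟩

lemma sum_mul_le_mul_add {ι : Type*} [DecidableEq ι] {s : Finset ι} {c a : ι → ℝ} {k : ι}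
    {L : ℝ} (hk : k ∈ s) (hc : ∀ i ∈ s, 0 ≤ c i) (hcs : ∑ i ∈ s, c i ≤ 1)
    (ha : ∀ i ∈ s, a i ≤ L) (hL : 0 ≤ L) :
    ∑ i ∈ s, c i * a i ≤ c k * a k + L := by
  rw [← add_sum_erase s _ hk]
  have hce : ∑ i ∈ s.erase k, c i ≤ 1 :=
    (sum_le_sum_of_subset_of_nonneg (erase_subset k s) fun i hi _ => hc i hi).trans hcs
  calc c k * a k + ∑ i ∈ s.erase k, c i * a i
      ≤ c k * a k + ∑ i ∈ s.erase k, c i * L := by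
        gcongr with i hi
        exacts [hc i (mem_of_mem_erase hi), ha i (mem_of_mem_erase hi)]
    _ ≤ c k * a k + L := by
        rw [← sum_mul]
        nlinarith

lemma mul_add_mul_add_le_sum {ι : Type*} [Fintype ι] [DecidableEq ι] {w f : ι → ℝ} {m : ℝ}
    {a b : ι} (hab : a ≠ b) (hw : ∀ i, 0 ≤ w i) (hw1 : ∑ i, w i ≤ 1) (hm : m ≤ 0)
    (hf : ∀ i, m ≤ f i) :
    w a * f a + w b * f b + m ≤ ∑ i, w i * f i := by
  set s := univ \ {a, b}
  have hsplit (g : ι → ℝ) : ∑ i, g i = ∑ i ∈ s, g i + (g a + g b) := by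
    rw [← sum_sdiff (subset_univ {a, b}), sum_pair hab]
  have hws : ∑ i ∈ s, w i ≤ 1 := by
    linarith [hsplit w, hw a, hw b]
  have hrest : (∑ i ∈ s, w i) * m ≤ ∑ i ∈ s, w i * f i := by
    rw [sum_mul]
    exact sum_le_sum fun i _ => mul_le_mul_of_nonneg_left (hf i) (hw i)
  rw [hsplit fun i => w i * f i]
  nlinarith

lemma exists_pos_le_of_le_mul_log {ι : Type*} [Finite ι] [Nonempty ι] {c : ι → ℝ}
    (hc : ∀ i, 0 < c i) (A : ℝ) :
    ∃ δ > 0, ∀ i, ∀ y > 0, A ≤ c i * log y → δ ≤ y := by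
  obtain ⟨i₀, hi₀⟩ := Finite.exists_min c
  refine ⟨exp (min A 0 / c i₀), exp_pos _, fun i y hy hAy => ?_⟩
  rw [← le_log_iff_exp_le hy]
  calc min A 0 / c i₀ ≤ min A 0 / c i := by
        rw [div_le_div_iff₀ (hc i₀) (hc i)]
        exact mul_le_mul_of_nonpos_left (hi₀ i) (min_le_right _ _)
    _ ≤ A / c i := by gcongr; exacts [(hc i).le, min_le_left _ _]
    _ ≤ log y := by rwa [div_le_iff₀' (hc i)]

lemma Fin.sub_one_lt_of_ne_zero {n : ℕ} {i : Fin (n + 1)} (hi : i ≠ 0) : i - 1 < i := by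
  rw [Fin.lt_def, Fin.val_sub_one_of_ne_zero hi]
  have := Fin.val_ne_zero_iff.2 hi
  omega

lemma Fin.le_sub_one_of_lt {n : ℕ} {i j : Fin (n + 1)} (h : j < i) : j ≤ i - 1 := by
  rw [Fin.le_def, Fin.val_sub_one_of_ne_zero (Fin.ne_zero_of_lt h)]
  rw [Fin.lt_def] at h
  omega

section Gaps

variable {n : ℕ} {x : Fin (n + 2) → ℝ}

lemma rball_le_sub_pred {i : Fin (n + 2)} (hi : i ≠ 0) : rball n x i ≤ x i - x (i - 1) := by
  rw [rball, if_neg (Fin.val_ne_zero_iff.2 hi)]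
  split_ifs
  exacts [le_rfl, min_le_left _ _]

lemma rball_le_succ_sub {i : Fin (n + 2)} (hi : i ≠ Fin.last (n + 1)) :
    rball n x i ≤ x (i + 1) - x i := by
  rw [rball]
  split_ifs with h0 hl
  · obtain rfl : i = 0 := Fin.ext h0
    simp
  · exact absurd (Fin.ext hl) hi
  · exact min_le_right _ _

variable (hx : StrictMono x)
include hx

lemma rball_pos (i : Fin (n + 2)) : 0 < rball n x i := by
  rw [rball]
  split_ifs with h0 hl
  · exact sub_pos.2 (hx Fin.zero_lt_one)
  · exact sub_pos.2 (hx (Fin.sub_one_lt_of_ne_zero (Fin.val_ne_zero_iff.1 h0)))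
  · refine lt_min (sub_pos.2 (hx (Fin.sub_one_lt_of_ne_zero (Fin.val_ne_zero_iff.1 h0))))
      (sub_pos.2 (hx (Fin.lt_add_one_iff.2 (Fin.lt_last_iff_ne_last.2 ?_))))
    simpa [Fin.ext_iff] using hl

lemma rball_le_abs_sub {i j : Fin (n + 2)} (hij : i ≠ j) : rball n x i ≤ |x i - x j| := by
  rcases hij.lt_or_gt with h | h
  · calc rball n x i ≤ x (i + 1) - x i := rball_le_succ_sub (Fin.ne_last_of_lt h)
      _ ≤ x j - x i := by gcongr; exact hx.monotone (Fin.add_one_le_of_lt h)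
      _ = |x i - x j| := by rw [abs_sub_comm, abs_of_pos (sub_pos.2 (hx h))]
  · calc rball n x i ≤ x i - x (i - 1) := rball_le_sub_pred (Fin.ne_zero_of_lt h)
      _ ≤ x i - x j := by gcongr; exact hx.monotone (Fin.le_sub_one_of_lt h)
      _ = |x i - x j| := (abs_of_pos (sub_pos.2 (hx h))).symm

lemma rball_le_diam (i : Fin (n + 2)) : rball n x i ≤ x (Fin.last (n + 1)) - x 0 := by
  obtain ⟨j, hji⟩ := exists_ne i
  have hmono (k : Fin (n + 2)) : x 0 ≤ x k ∧ x k ≤ x (Fin.last (n + 1)) :=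
    ⟨hx.monotone (Fin.zero_le k), hx.monotone (Fin.le_last k)⟩
  refine (rball_le_abs_sub hx hji.symm).trans (abs_sub_le_iff.2 ⟨?_, ?_⟩) <;>
    linarith [hmono i, hmono j]

end Gaps

def gapWeight {ι : Type*} (w : ι → ℝ) (χ : ℝ) (i : ι) : ℝ := w i * (1 - χ * (1 - w i))

section GapWeight

variable {ι : Type*} {w : ι → ℝ} {χ : ℝ} {i : ι}

lemma gapWeight_pos (hw0 : 0 < w i) (hw1 : w i ≤ 1) (hχ : χ < 1) : 0 < gapWeight w χ i := by
  have : χ * (1 - w i) < 1 := by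
    rcases le_or_gt χ 0 with h | h <;> nlinarith
  exact mul_pos hw0 (by linarith)

lemma gapWeight_le (hw0 : 0 ≤ w i) (hw1 : w i ≤ 1) (hχ : 0 ≤ χ) : gapWeight w χ i ≤ w i := by
  have : 0 ≤ χ * (1 - w i) := mul_nonneg hχ (by linarith)
  unfold gapWeight
  nlinarith

end GapWeight

section Energy

variable {n : ℕ} {x : Fin (n + 2) → ℝ} {w : Fin (n + 2) → ℝ} (hx : StrictMono x)
include hx

lemma sum_mul_log_rball_le_interaction (hw : ∀ i, 0 ≤ w i) (hw1 : ∑ i, w i = 1) :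
    ∑ i, w i * (1 - w i) * log (rball n x i)
      ≤ ∑ i, ∑ j ∈ univ.erase i, w i * w j * log |x i - x j| := by
  refine sum_le_sum fun i _ => ?_
  have hrest : ∑ j ∈ univ.erase i, w j = 1 - w i := by
    rw [sum_erase_eq_sub (mem_univ i), hw1]
  rw [← hrest, mul_sum, sum_mul]
  refine sum_le_sum fun j hj => ?_
  gcongr
  · exact mul_nonneg (hw i) (hw j)
  · exact rball_pos hx i
  · exact rball_le_abs_sub hx (ne_of_mem_erase hj).symm

lemma kellerSegelEnergy_ge (V : ℝ → ℝ) {χ : ℝ} (hw : ∀ i, 0 < w i) (hw1 : ∑ i, w i = 1)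
    (hχ : 0 ≤ χ) :
    ∑ i, w i * log (w i) + ∑ i, w i * V (x i) - ∑ i, gapWeight w χ i * log (rball n x i)
      ≤ kellerSegelEnergy n w V χ x := by
  have hentropy : ∑ i, w i * log (w i / rball n x i)
      = ∑ i, w i * log (w i) - ∑ i, w i * log (rball n x i) := by
    rw [← sum_sub_distrib]
    refine sum_congr rfl fun i _ => ?_
    rw [log_div (hw i).ne' (rball_pos hx i).ne']
    ring
  have hgap : ∑ i, gapWeight w χ i * log (rball n x i)
      = ∑ i, w i * log (rball n x i) - χ * ∑ i, w i * (1 - w i) * log (rball n x i) := by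
    rw [mul_sum, ← sum_sub_distrib]
    refine sum_congr rfl fun i _ => ?_
    unfold gapWeight
    ring
  have hint := mul_le_mul_of_nonneg_left
    (sum_mul_log_rball_le_interaction hx (fun i => (hw i).le) hw1) hχ
  rw [kellerSegelEnergy]
  linarith

lemma sum_mul_log_rball_le {c : Fin (n + 2) → ℝ} (hc : ∀ i, 0 ≤ c i) (hc1 : ∑ i, c i ≤ 1)
    {k : Fin (n + 2)} (hk : k ≠ 0) :
    ∑ i, c i * log (rball n x i)
      ≤ c k * log (x k - x (k - 1)) + log (max 1 (x (Fin.last (n + 1)) - x 0)) := by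
  calc ∑ i, c i * log (rball n x i)
      ≤ c k * log (rball n x k) + log (max 1 (x (Fin.last (n + 1)) - x 0)) :=
        sum_mul_le_mul_add (mem_univ k) (fun i _ => hc i) hc1
          (fun i _ => log_le_log (rball_pos hx i) ((rball_le_diam hx i).trans (le_max_right _ _)))
          (log_nonneg (le_max_left _ _))
    _ ≤ c k * log (x k - x (k - 1)) + log (max 1 (x (Fin.last (n + 1)) - x 0)) := by
        gcongr
        exacts [hc k, rball_pos hx k, rball_le_sub_pred hk]

end Energy

section PairPotential

variable {V : ℝ → ℝ} {m a b : ℝ} (hV : ∀ t, m ≤ V t) (ha : 0 ≤ a) (hb : 0 ≤ b)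
include hV ha hb

lemma add_mul_le_mul_add_mul (y z : ℝ) : (a + b) * m ≤ a * V y + b * V z := by
  rw [add_mul]
  exact add_le_add (mul_le_mul_of_nonneg_left (hV y) ha) (mul_le_mul_of_nonneg_left (hV z) hb)

lemma le_iInf_mul_add_mul (t : ℝ) : (a + b) * m ≤ ⨅ y, a * V y + b * V (t + y) :=
  le_ciInf fun y => add_mul_le_mul_add_mul hV ha hb y (t + y)

lemma iInf_mul_add_mul_le (t s : ℝ) : ⨅ y, a * V y + b * V (t + y) ≤ a * V s + b * V (t + s) :=
  ciInf_le ⟨(a + b) * m, by rintro _ ⟨y, rfl⟩; exact add_mul_le_mul_add_mul hV ha hb y (t + y)⟩ s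

end PairPotential

/-- for `N ≥ 2`, positive weights summing to one, `0 < χ < 1`, `V`
continuous and coercive with `x ↦ inf_y (w₁V(y) + w_N V(x+y)) − log|x|` coercive, every
energy sublevel set has its minimal inter-particle distance bounded below by a positive
constant. -/
theorem kellerSegel_min_gap_bound (n : ℕ) (w : Fin (n + 2) → ℝ)
    (hw : ∀ i, 0 < w i) (hw1 : ∑ i, w i = 1) (χ : ℝ) (hχ0 : 0 < χ) (hχ1 : χ < 1)
    (V : ℝ → ℝ) (hVcont : Continuous V)
    (hVcoer : Tendsto V (cocompact ℝ) atTop)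
    (hVW : Tendsto
      (fun t : ℝ => (⨅ y : ℝ, (w 0 * V y + w (Fin.last (n + 1)) * V (t + y))) -
        Real.log |t|) (cocompact ℝ) atTop)
    (E₀ : ℝ) :
    ∃ δ > 0, ∀ x : Fin (n + 2) → ℝ, StrictMono x →
      kellerSegelEnergy n w V χ x ≤ E₀ →
      ∀ i : Fin (n + 2), i.val ≠ 0 → δ ≤ x i - x (i - 1) := by
  set L := Fin.last (n + 1)
  have hw_le (i : Fin (n + 2)) : w i ≤ 1 :=
    hw1 ▸ single_le_sum (fun j _ => (hw j).le) (mem_univ i)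
  obtain ⟨m, hm0, hVm⟩ : ∃ m ≤ 0, ∀ t, m ≤ V t := by
    obtain ⟨t₀, ht₀⟩ := hVcont.exists_forall_le hVcoer
    exact ⟨min 0 (V t₀), min_le_left _ _, fun t => (min_le_right _ _).trans (ht₀ t)⟩
  obtain ⟨C, hC⟩ := exists_log_le_add_of_tendsto
    (le_iInf_mul_add_mul hVm (hw 0).le (hw L).le) hVW
  obtain ⟨δ, hδ, hδ_le⟩ := exists_pos_le_of_le_mul_log
    (fun i => gapWeight_pos (hw i) (hw_le i) hχ1) (∑ i, w i * log (w i) + m - C - E₀)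
  refine ⟨δ, hδ, fun x hx hE k hk => ?_⟩
  have hk0 : k ≠ 0 := Fin.val_ne_zero_iff.1 hk
  refine hδ_le k _ (sub_pos.2 (hx (Fin.sub_one_lt_of_ne_zero hk0))) ?_
  have hD : 0 < x L - x 0 := sub_pos.2 (hx Fin.last_pos)
  have henergy := kellerSegelEnergy_ge hx V hw hw1 hχ0.le
  have hgaps := sum_mul_log_rball_le hx (fun i => (gapWeight_pos (hw i) (hw_le i) hχ1).le)
    (hw1 ▸ sum_le_sum fun i _ => gapWeight_le (hw i).le (hw_le i) hχ0.le) hk0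
  have hends := mul_add_mul_add_le_sum (f := fun i => V (x i)) Fin.last_pos.ne
    (fun i => (hw i).le) hw1.le hm0 (fun i => hVm (x i))
  have hpair := iInf_mul_add_mul_le hVm (hw 0).le (hw L).le (x L - x 0) (x 0)
  have hlog := hC (x L - x 0)
  rw [sub_add_cancel] at hpair
  rw [abs_of_pos hD] at hlog
  linarith
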